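/- Let A be an m×n strictly sign regular matrix with sign pattern ε = (ε_1, …, ε_{min{m,n}}) (all r×r minors have sign ε_r). Then S^+(Ax) ≤ S^-(x) for all nonzero x ∈ ℝ^n. -/

import Mathlib

/-!
Let `k = S⁻(x)`; we may assume `k < m`, since `S⁺ ≤ m`. The support of `x` splits into `k + 1`
consecutive blocks on which `x` has constant sign, alternating from block to block. Summing the
columns of `A` over each block, weighted by `x`, gives an `m × (k + 1)` matrix `C` with
`A x = C 1`. By multilinearity every maximal minor of `C` is a sum of `(k + 1)`-minors of `A`
times products of entries of `x`, one from each block, and all these terms have the same strict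
sign; so all maximal minors of `C` are nonzero of one sign.
If `S⁺(C c) ≥ k + 1` for some `c ≠ 0`, then `y = C c` weakly alternates in sign on some rows
`G₀ < ⋯ < G_{k+1}`. The bordered matrix `[y | C]` on these rows is singular; its Laplace
expansion along the first column is a sum of terms of one sign, so `y` vanishes on all these
rows, contradicting the nonsingularity of `C` on `G₀, …, G_k`.
-/

open Matrix Filter

/-- Number of sign changes in a list of reals (consecutive pairs with negative product). -/
noncomputable def signChanges (l : List ℝ) : ℕ :=
  (l.zip l.tail).countP (fun p => decide (p.1 * p.2 < 0))

/-- `S^-(v)`: sign changes of the coordinates of `v` after discarding zero entries. -/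
noncomputable def Sm {n : ℕ} (v : Fin n → ℝ) : ℕ :=
  signChanges ((List.ofFn v).filter (fun x => decide (x ≠ 0)))

/-- `S^+(v)`: maximal number of sign changes over all ±1 completions of the zero
entries of `v`, with the convention `S^+(0) = n`. -/
noncomputable def Sp {n : ℕ} (v : Fin n → ℝ) : ℕ :=
  if v = 0 then n
  else Finset.univ.sup (fun σ : Fin n → Bool =>
    signChanges (List.ofFn (fun i => if v i = 0 then (if σ i then (1:ℝ) else -1) else v i)))

/-- First nonzero entry of a vector (`0` if the vector is zero). -/
noncomputable def firstNz {n : ℕ} (v : Fin n → ℝ) : ℝ :=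
  ((List.ofFn v).filter (fun x => decide (x ≠ 0))).headI

/-- `A` is strictly sign regular with sign pattern `ε`:
every `r × r` minor (`1 ≤ r ≤ min m n`) is nonzero with sign `ε r`. -/
def ssrPattern {m n : ℕ} (A : Matrix (Fin m) (Fin n) ℝ) (ε : ℕ → ℝ) : Prop :=
  ∀ r : ℕ, 1 ≤ r → r ≤ min m n → ∀ (f : Fin r → Fin m) (g : Fin r → Fin n),
    StrictMono f → StrictMono g → 0 < ε r * (A.submatrix f g).det

/-- `A` is sign regular with sign pattern `ε`:
every nonzero `r × r` minor (`1 ≤ r ≤ min m n`) has sign `ε r`. -/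
def srPattern {m n : ℕ} (A : Matrix (Fin m) (Fin n) ℝ) (ε : ℕ → ℝ) : Prop :=
  ∀ r : ℕ, 1 ≤ r → r ≤ min m n → ∀ (f : Fin r → Fin m) (g : Fin r → Fin n),
    StrictMono f → StrictMono g → 0 ≤ ε r * (A.submatrix f g).det

/-- The map `f` picks out consecutive indices. -/
def Contig {r m : ℕ} (f : Fin r → Fin m) : Prop :=
  ∃ a : ℕ, ∀ i : Fin r, (f i : ℕ) = a + (i : ℕ)

open Finset

lemma signChanges_cons_cons (a b : ℝ) (l : List ℝ) :
    signChanges (a :: b :: l) = (if a * b < 0 then 1 else 0) + signChanges (b :: l) := by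
  by_cases h : a * b < 0 <;> simp [signChanges, h, add_comm]

lemma signChanges_le_length (l : List ℝ) : signChanges l ≤ l.length :=
  List.countP_le_length.trans (by simp)

lemma signChanges_le_cons (a : ℝ) (l : List ℝ) : signChanges l ≤ signChanges (a :: l) := by
  cases l with
  | nil => exact Nat.zero_le _
  | cons b l => rw [signChanges_cons_cons]; omega

lemma signChanges_cons_le (a : ℝ) (l : List ℝ) : signChanges (a :: l) ≤ signChanges l + 1 := by
  cases l with
  | nil => exact Nat.zero_le _
  | cons b l => rw [signChanges_cons_cons]; split <;> omega

lemma signChanges_le_of_suffix {s l : List ℝ} (h : s <:+ l) : signChanges s ≤ signChanges l := by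
  induction l with
  | nil => rw [List.suffix_nil.mp h]
  | cons a l ih =>
    rcases List.suffix_cons_iff.mp h with rfl | h
    · exact le_rfl
    · exact (ih h).trans (signChanges_le_cons a l)

lemma getLastD_eq_of_suffix {s l : List ℝ} (h : s <:+ l) (hs : s ≠ []) (d : ℝ) :
    s.getLastD d = l.getLastD d := by
  obtain ⟨u, rfl⟩ := h
  simp [List.getLastD_eq_getLast?, List.getLast?_append, List.getLast?_eq_some_getLast hs]

lemma mul_getLastD_mul_neg_one_pow_signChanges_pos (a : ℝ) (l : List ℝ)
    (h : ∀ b ∈ a :: l, b ≠ 0) : 0 < a * (a :: l).getLastD 0 * (-1) ^ signChanges (a :: l) := by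
  induction l generalizing a with
  | nil => simpa [signChanges] using mul_self_pos.mpr (h a List.mem_cons_self)
  | cons b l ih =>
    have hb : b ≠ 0 := h b (by simp)
    have ih := ih b fun c hc => h c (List.mem_cons_of_mem a hc)
    rw [signChanges_cons_cons]
    simp only [List.getLastD_cons] at ih ⊢
    have hb2 := mul_self_pos.mpr hb
    split_ifs with hab
    · rw [pow_add, pow_one]; nlinarith
    · have hab : 0 < a * b := lt_of_le_of_ne (not_lt.mp hab) (mul_ne_zero (h a (by simp)) hb).symm
      rw [zero_add]; nlinarith

lemma filter_drop_eq_cons {l : List ℝ} {j : ℕ} (hj : j < l.length) (h : l[j] ≠ 0) :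
    (l.drop j).filter (· ≠ 0) = l[j] :: (l.drop (j + 1)).filter (· ≠ 0) := by
  rw [List.drop_eq_getElem_cons hj, List.filter_cons_of_pos (by simpa using h)]

lemma mul_getLastD_filter_mul_neg_one_pow_pos {l : List ℝ} {j : ℕ} (hj : j < l.length)
    (h : l[j] ≠ 0) :
    0 < l[j] * (l.filter (· ≠ 0)).getLastD 0 *
      (-1) ^ signChanges ((l.drop j).filter (· ≠ 0)) := by
  have hlast := getLastD_eq_of_suffix ((List.drop_suffix j l).filter (· ≠ 0))
    (by rw [filter_drop_eq_cons hj h]; exact List.cons_ne_nil _ _) 0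
  rw [← hlast, filter_drop_eq_cons hj h]
  refine mul_getLastD_mul_neg_one_pow_signChanges_pos _ _ fun b hb => ?_
  rw [← filter_drop_eq_cons hj h] at hb
  simpa using (List.mem_filter.mp hb).2

lemma exists_signChanges_filter_drop_eq (l : List ℝ) (hl : l.filter (· ≠ 0) ≠ []) (t : ℕ)
    (ht : t ≤ signChanges (l.filter (· ≠ 0))) :
    ∃ (j : ℕ) (hj : j < l.length), l[j] ≠ 0 ∧ signChanges ((l.drop j).filter (· ≠ 0)) = t := by
  induction l with
  | nil => simp at hl
  | cons a l ih =>
    have shift : ∀ j (hj : j < l.length), l[j] ≠ 0 ∧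
        signChanges ((l.drop j).filter (· ≠ 0)) = t →
        ∃ (j : ℕ) (hj : j < (a :: l).length), (a :: l)[j] ≠ 0 ∧
          signChanges (((a :: l).drop j).filter (· ≠ 0)) = t :=
      fun j hj hjt => ⟨j + 1, by simpa using hj, hjt⟩
    by_cases ha : a = 0
    · rw [List.filter_cons_of_neg (by simpa using ha)] at hl ht
      obtain ⟨j, hj, hjt⟩ := ih hl ht
      exact shift j hj hjt
    rw [List.filter_cons_of_pos (by simpa using ha)] at ht
    rcases ht.eq_or_lt with rfl | ht
    · exact ⟨0, by simp, ha, by rw [List.drop_zero, List.filter_cons_of_pos (by simpa using ha)]⟩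
    have hl : l.filter (· ≠ 0) ≠ [] := by
      rintro hnil; rw [hnil] at ht; exact Nat.not_lt_zero _ ht
    obtain ⟨j, hj, hjt⟩ := ih hl (Nat.le_of_lt_succ (ht.trans_le (signChanges_cons_le a _)))
    exact shift j hj hjt

theorem exists_sign_blocks {n : ℕ} (x : Fin n → ℝ) (hx : x ≠ 0) :
    ∃ β : Fin n → Fin (Sm x + 1), Monotone β ∧ (∀ t, ∃ i, β i = t ∧ x i ≠ 0) ∧
      ∃ τ : ℝ, ∀ i, x i ≠ 0 → 0 < τ * (-1) ^ (β i : ℕ) * x i := by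
  set l := List.ofFn x
  set k := Sm x
  let γ : Fin n → ℕ := fun i => signChanges ((l.drop i).filter (· ≠ 0))
  have hγ_le : ∀ i, γ i ≤ k := fun i =>
    signChanges_le_of_suffix ((List.drop_suffix _ _).filter _)
  have hγ_anti : Antitone γ := fun i j hij => signChanges_le_of_suffix <| by
    refine List.IsSuffix.filter _ ?_
    rw [show (j : ℕ) = i + (j - i) by omega, ← List.drop_drop]
    exact List.drop_suffix _ _
  refine ⟨fun i => ⟨k - γ i, by omega⟩, fun i j hij => ?_, fun t => ?_, ?_⟩
  · have := hγ_anti hij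
    simp only [Fin.mk_le_mk]
    omega
  · have hl : l.filter (· ≠ 0) ≠ [] := by
      obtain ⟨i, hi⟩ := Function.ne_iff.mp hx
      exact List.ne_nil_of_mem (List.mem_filter.mpr ⟨List.mem_ofFn.mpr ⟨i, rfl⟩, by simpa using hi⟩)
    obtain ⟨j, hj, hxj, hjt⟩ := exists_signChanges_filter_drop_eq l hl (k - t) (Nat.sub_le _ _)
    rw [List.length_ofFn] at hj
    refine ⟨⟨j, hj⟩, Fin.ext ?_, by simpa [l] using hxj⟩
    simp only [γ, hjt]
    omega
  · refine ⟨(l.filter (· ≠ 0)).getLastD 0 * (-1) ^ k, fun i hi => ?_⟩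
    have hpos := mul_getLastD_filter_mul_neg_one_pow_pos (l := l) (j := i) (by simp [l])
      (by simpa [l] using hi)
    have hparity : (-1 : ℝ) ^ k = (-1) ^ (k - γ i) * (-1) ^ γ i := by
      rw [← pow_add, Nat.sub_add_cancel (hγ_le i)]
    have hsq : ((-1 : ℝ) ^ (k - γ i)) ^ 2 = 1 := by
      rw [← pow_mul, pow_mul', neg_one_sq, one_pow]
    simp only [List.getElem_ofFn, l] at hpos
    calc (0 : ℝ) < x i * (l.filter (· ≠ 0)).getLastD 0 * (-1) ^ γ i * ((-1) ^ (k - γ i)) ^ 2 := by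
          rw [hsq, mul_one]; exact hpos
      _ = _ := by rw [hparity]; ring

lemma strictMono_of_monotone_comp {α β γ : Type*} [Preorder α] [LinearOrder β] [Preorder γ]
    {f : β → γ} {g : α → β} (hf : Monotone f) (hfg : StrictMono (f ∘ g)) : StrictMono g :=
  fun _ _ hab => lt_of_not_ge fun hba => (hfg hab).not_ge (hf hba)

lemma Sp_le {m : ℕ} (v : Fin m → ℝ) : Sp v ≤ m := by
  unfold Sp
  split_ifs
  · exact le_rfl
  · exact Finset.sup_le fun σ _ => (signChanges_le_length _).trans (List.length_ofFn).le

theorem exists_alternating_of_le_Sp {m K : ℕ} (y : Fin m → ℝ) (hy : y ≠ 0) (hK : K ≤ Sp y) :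
    ∃ G : Fin (K + 1) → Fin m, StrictMono G ∧
      ∃ τ : ℝ, τ ≠ 0 ∧ ∀ p : Fin (K + 1), 0 ≤ τ * (-1) ^ (p : ℕ) * y (G p) := by
  obtain ⟨i₀, hi₀⟩ := Function.ne_iff.mp hy
  rw [Sp, if_neg hy] at hK
  obtain ⟨σ, -, hσ⟩ := exists_mem_eq_sup univ univ_nonempty
    (fun σ : Fin m → Bool =>
      signChanges (List.ofFn (fun i => if y i = 0 then (if σ i then (1:ℝ) else -1) else y i)))
  set z : Fin m → ℝ := fun i => if y i = 0 then (if σ i then (1:ℝ) else -1) else y i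
  have hz : ∀ i, z i ≠ 0 := fun i => by
    by_cases h : y i = 0 <;> by_cases h' : σ i <;> simp [z, h, h']
  have hz_eq : ∀ i, y i ≠ 0 → z i = y i := fun i h => if_neg h
  have hSm : Sm z = signChanges (List.ofFn z) := by
    rw [Sm, List.filter_eq_self.mpr (by simpa using hz)]
  obtain ⟨β, hβ, hcov, τ, hsign⟩ := exists_sign_blocks z (Function.ne_iff.mpr ⟨i₀, hz i₀⟩)
  have hKz : K + 1 ≤ Sm z + 1 := by rw [hSm]; omega
  choose G hG using fun p : Fin (K + 1) => hcov (Fin.castLE hKz p)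
  refine ⟨G, strictMono_of_monotone_comp hβ fun p q hpq => ?_, τ, ?_, fun p => ?_⟩
  · simpa [(hG p).1, (hG q).1] using hpq
  · rintro rfl; simpa using hsign i₀ (hz i₀)
  · by_cases h : y (G p) = 0
    · rw [h, mul_zero]
    · simpa [(hG p).1, hz_eq _ h] using (hsign (G p) (hG p).2).le

lemma sum_neg_one_pow_mul_mulVec_mul_det_submatrix_succAbove {R : Type*} [CommRing R]
    [IsDomain R] {K : ℕ} (M : Matrix (Fin (K + 1)) (Fin K) R) (c : Fin K → R) :
    ∑ p : Fin (K + 1), (-1) ^ (p : ℕ) * (M *ᵥ c) p * (M.submatrix p.succAbove id).det = 0 := by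
  set D : Matrix (Fin (K + 1)) (Fin (K + 1)) R := of fun p => Fin.cons ((M *ᵥ c) p) (M p)
  have hD : D.det = 0 := by
    rw [← exists_mulVec_eq_zero_iff]
    refine ⟨Fin.cons 1 (-c), fun h => by simpa using congrFun h 0, ?_⟩
    ext p
    simp [D, mulVec, dotProduct, Fin.sum_univ_succ]
  rw [← hD, det_succ_column_zero]
  rfl

lemma det_of_sum_mul {R κ ι : Type*} [CommRing R] [Fintype κ] [DecidableEq κ] [DecidableEq ι]
    (M : Matrix κ ι R) (x : ι → R) (B : κ → Finset ι) :
    (of fun p t => ∑ j ∈ B t, M p j * x j).det =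
      ∑ r ∈ Fintype.piFinset B, (∏ t, x (r t)) * (M.submatrix id r).det := by
  have hcols : (of fun p t => ∑ j ∈ B t, M p j * x j)ᵀ =
      fun t => ∑ j ∈ B t, x j • fun p => M p j := by
    ext t p; simp [mul_comm]
  rw [← det_transpose, hcols]
  change (detRowAlternating (R := R)).toMultilinearMap _ = _
  rw [MultilinearMap.map_sum_finset]
  refine sum_congr rfl fun r _ => ?_
  rw [MultilinearMap.map_smul_univ, smul_eq_mul, ← det_transpose]
  rfl

theorem Sp_mulVec_lt {m K : ℕ} (C : Matrix (Fin m) (Fin K) ℝ) (hKm : K ≤ m) (s : ℝ)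
    (hC : ∀ f : Fin K → Fin m, StrictMono f → 0 < s * (C.submatrix f id).det)
    {c : Fin K → ℝ} (hc : c ≠ 0) : Sp (C *ᵥ c) < K := by
  set y := C *ᵥ c
  have hrows : ∀ f : Fin K → Fin m, StrictMono f → ∃ p, y (f p) ≠ 0 := by
    intro f hf
    by_contra! h
    have hdet : (C.submatrix f id).det ≠ 0 := fun h0 => by simpa [h0] using hC f hf
    refine hc (eq_zero_of_mulVec_eq_zero hdet ?_)
    ext p
    simpa [y, mulVec, dotProduct] using h p
  have hy : y ≠ 0 := fun h => by
    obtain ⟨p, hp⟩ := hrows _ (Fin.strictMono_castLE hKm)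
    exact hp (by simp [h])
  by_contra! hK
  obtain ⟨G, hG, τ, hτ, halt⟩ := exists_alternating_of_le_Sp y hy hK
  have hminor : ∀ p : Fin (K + 1),
      0 < s * ((C.submatrix G id).submatrix p.succAbove id).det :=
    fun p => hC _ (hG.comp p.strictMono_succAbove)
  -- after multiplying by `τ s`, all terms of the Laplace expansion are `≥ 0`
  have hsum : ∑ p : Fin (K + 1), τ * (-1) ^ (p : ℕ) * y (G p) *
      (s * ((C.submatrix G id).submatrix p.succAbove id).det) = 0 := by
    rw [← mul_zero (τ * s),
      ← sum_neg_one_pow_mul_mulVec_mul_det_submatrix_succAbove (C.submatrix G id) c, mul_sum]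
    refine sum_congr rfl fun p _ => ?_
    change _ = τ * s * ((-1) ^ (p : ℕ) * y (G p) * _)
    ring
  have hzero : ∀ p, y (G p) = 0 := fun p => by
    have := (sum_eq_zero_iff_of_nonneg fun p _ => mul_nonneg (halt p) (hminor p).le).mp hsum p
      (mem_univ p)
    simpa [hτ] using (mul_eq_zero.mp this).resolve_right (hminor p).ne'
  obtain ⟨p, hp⟩ := hrows (G ∘ Fin.castSucc) (hG.comp Fin.strictMono_castSucc)
  exact hp (hzero _)

noncomputable def blockMatrix {m n K : ℕ} (A : Matrix (Fin m) (Fin n) ℝ) (x : Fin n → ℝ)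
    (β : Fin n → Fin K) : Matrix (Fin m) (Fin K) ℝ :=
  of fun i t => ∑ j with x j ≠ 0 ∧ β j = t, A i j * x j

lemma blockMatrix_mulVec_one {m n K : ℕ} (A : Matrix (Fin m) (Fin n) ℝ) (x : Fin n → ℝ)
    (β : Fin n → Fin K) : blockMatrix A x β *ᵥ 1 = A *ᵥ x := by
  ext i
  simp only [blockMatrix, mulVec, dotProduct, of_apply, Pi.one_apply, mul_one]
  simp_rw [← filter_filter]
  rw [sum_fiberwise, sum_filter_of_ne fun j _ h => right_ne_zero_of_mul h]

theorem det_blockMatrix_submatrix_pos {m n K : ℕ} (A : Matrix (Fin m) (Fin n) ℝ)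
    (x : Fin n → ℝ) (β : Fin n → Fin K) (σ : Fin K → ℝ) (ε : ℝ) (hβ : Monotone β)
    (hcov : ∀ t, ∃ i, β i = t ∧ x i ≠ 0) (hsign : ∀ i, x i ≠ 0 → 0 < σ (β i) * x i)
    (hA : ∀ (f : Fin K → Fin m) (g : Fin K → Fin n), StrictMono f → StrictMono g →
      0 < ε * (A.submatrix f g).det)
    (f : Fin K → Fin m) (hf : StrictMono f) :
    0 < (∏ t, σ t) * ε * ((blockMatrix A x β).submatrix f id).det := by
  set B : Fin K → Finset (Fin n) := fun t => {j | x j ≠ 0 ∧ β j = t}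
  have hB : ∀ r ∈ Fintype.piFinset B, ∀ t, x (r t) ≠ 0 ∧ β (r t) = t := by simp [B]
  have hexp : ((blockMatrix A x β).submatrix f id).det =
      ∑ r ∈ Fintype.piFinset B, (∏ t, x (r t)) * ((A.submatrix f id).submatrix id r).det :=
    det_of_sum_mul (A.submatrix f id) x B
  rw [hexp, mul_sum]
  refine sum_pos (fun r hr => ?_) (Fintype.piFinset_nonempty.mpr fun t => ?_)
  · have hr := hB r hr
    have hmono : StrictMono r := strictMono_of_monotone_comp hβ <| by
      rw [show β ∘ r = id from funext fun t => (hr t).2]; exact strictMono_id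
    calc (0 : ℝ) < (∏ t, σ t * x (r t)) * (ε * (A.submatrix f r).det) :=
          mul_pos (prod_pos fun t _ => by simpa [(hr t).2] using hsign _ (hr t).1)
            (hA f r hf hmono)
      _ = _ := by
          rw [prod_mul_distrib, submatrix_submatrix, Function.comp_id, Function.id_comp]; ring
  · obtain ⟨i, hi, hxi⟩ := hcov t
    exact ⟨i, by simp [B, hi, hxi]⟩

theorem stmt3_general {m n : ℕ} (A : Matrix (Fin m) (Fin n) ℝ) (ε : ℕ → ℝ)
    (hA : ssrPattern A ε) :
    ∀ x : Fin n → ℝ, x ≠ 0 → Sp (A *ᵥ x) ≤ Sm x := by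
  intro x hx
  by_cases hmk : m ≤ Sm x
  · exact (Sp_le _).trans hmk
  obtain ⟨β, hβ, hcov, τ, hsign⟩ := exists_sign_blocks x hx
  have hkn : Sm x + 1 ≤ n := by
    simpa using Fintype.card_le_of_surjective β fun t => (hcov t).imp fun _ h => h.1
  have hdet := det_blockMatrix_submatrix_pos A x β (fun t => τ * (-1) ^ (t : ℕ)) (ε (Sm x + 1))
    hβ hcov hsign (hA (Sm x + 1) (by omega) (by omega))
  have := Sp_mulVec_lt (blockMatrix A x β) (by omega) _ hdet one_ne_zero
  rw [blockMatrix_mulVec_one] at this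
  omega

theorem stmt3 {m n : ℕ} (A : Matrix (Fin m) (Fin n) ℝ) (ε : ℕ → ℝ)
    (hsv : ∀ r, ε r = 1 ∨ ε r = -1) (hA : ssrPattern A ε) :
    ∀ x : Fin n → ℝ, x ≠ 0 → Sp (A *ᵥ x) ≤ Sm x :=
  stmt3_general A ε hA
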